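/- Consider the merge sort CHR^rp program with rules: 1 :: ms1 @ arrow(X,A) \ arrow(X,B) ⇔ A < B | arrow(A,B); 2 :: ms2 @ merge(N,A), merge(N,B) ⇔ A < B | merge(2·N+1,A), arrow(A,B); 3 :: ms3 @ number(X) ⇔ merge(0,X), executed under ω_p from an initial goal of n distinct number/1 constraints. Define a chain of length m−1 from X_1 to X_m in a state as stored constraints arrow(X_1,X_2), arrow(X_2,X_3), ..., arrow(X_{m−1},X_m). Then in every reachable state of priority 2 or lower (i.e., in which no priority-1 rule instance is applicable), for every stored constraint merge(N,X) the maximal length of a chain starting in X is at most N. -/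

import Mathlib

namespace MergeSort

/-- The CHR constraints of the merge sort program: `number X`, `merge N A` and
`arrow A B`. -/
inductive MSC : Type
  | number (x : ℤ)
  | merge (n : ℕ) (a : ℤ)
  | arrow (a b : ℤ)
deriving DecidableEq

/-- Some instance of rule `ms1` (priority 1) is applicable in the store `S`. -/
def ms1App (S : Multiset MSC) : Prop :=
  ∃ X A B : ℤ, A < B ∧ MSC.arrow X A ∈ S ∧ MSC.arrow X B ∈ S

/-- Some instance of rule `ms2` (priority 2) is applicable in the store `S`. -/
def ms2App (S : Multiset MSC) : Prop :=
  ∃ (N : ℕ) (A B : ℤ), A < B ∧ MSC.merge N A ∈ S ∧ MSC.merge N B ∈ S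

/-- Transition labels recording which rule fired (for `ms2` also the value `N` of the
matched `merge` constraints). -/
inductive Lab : Type
  | ms1
  | ms2 (N : ℕ)
  | ms3
deriving DecidableEq

/-- The transitions of the priority semantics ω_p of the merge sort program
`1 :: ms1 @ arrow(X,A) \ arrow(X,B) ⇔ A < B | arrow(A,B)`,
`2 :: ms2 @ merge(N,A), merge(N,B) ⇔ A < B | merge(2·N+1,A), arrow(A,B)`,
`3 :: ms3 @ number(X) ⇔ merge(0,X)`:
among all applicable rule instances, one of highest priority (numerically smallest)
fires, removing the constraints matching removed heads and adding the instantiated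
body.  (The guards `A < B` make the matched head constraints distinct; since no rule is
a propagation rule, no propagation history is needed and states are just multisets of
stored constraints.) -/
inductive Step : Multiset MSC → Lab → Multiset MSC → Prop
  | ms1 (S : Multiset MSC) (X A B : ℤ) :
      A < B → MSC.arrow X A ∈ S → MSC.arrow X B ∈ S →
      Step S Lab.ms1 (MSC.arrow A B ::ₘ S.erase (MSC.arrow X B))
  | ms2 (S : Multiset MSC) (N : ℕ) (A B : ℤ) :
      A < B → MSC.merge N A ∈ S → MSC.merge N B ∈ S →
      ¬ ms1App S →
      Step S (Lab.ms2 N)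
        (MSC.merge (2 * N + 1) A ::ₘ MSC.arrow A B ::ₘ
          ((S.erase (MSC.merge N A)).erase (MSC.merge N B)))
  | ms3 (S : Multiset MSC) (X : ℤ) :
      MSC.number X ∈ S → ¬ ms1App S → ¬ ms2App S →
      Step S Lab.ms3 (MSC.merge 0 X ::ₘ S.erase (MSC.number X))

/-- The initial store: one `number` constraint for each element of `l`. -/
def InitState (l : List ℤ) : Multiset MSC := ↑(l.map MSC.number)

/-- Reachability from the initial store of `l`. -/
def Reach (l : List ℤ) (S : Multiset MSC) : Prop :=
  Relation.ReflTransGen (fun s s' => ∃ lab, Step s lab s') (InitState l) S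

/-- `merge` constraints with first argument `N`. -/
def mergeFst (N : ℕ) : MSC → Bool
  | .merge m _ => m = N
  | _ => false

/-- `arrow` constraints with first argument `V`. -/
def arrowFst (V : ℤ) : MSC → Bool
  | .arrow a _ => a = V
  | _ => false

end MergeSort

/-!
Every rule replaces its removed constraints by constraints with the same keys, where the key
of `number X` and `merge N X` is `X` and that of `arrow A B` is `B`; so the keys of a reachable
store are the initial numbers, each occurring once. Hence every value has at most one incoming
arrow and none if it carries a `merge` or `number` constraint: the arrows form a forest whose
roots carry the `merge` constraints, and arrows go upwards by the guards. The invariant is that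
`X` has at most `N` descendants when `merge N X` is stored. Rule `ms1` moves the subtree of `B`
below its sibling `A`, which changes the descendants of no root; `ms2` hangs the tree of `B`
(at most `N + 1` nodes) below the root `A` (at most `N` descendants); `ms3` creates a root
without descendants. A chain from `X` is increasing, so it consists of distinct descendants.
-/

namespace Relation

variable {α : Type*} {R R' : α → α → Prop} {a b x y : α}

theorem TransGen.transGen_or_reflTransGen_of_le_or_edge
    (hR : ∀ u v, R' u v → R u v ∨ u = a ∧ v = b) (h : TransGen R' x y) :
    TransGen R x y ∨ ReflTransGen R b y := by
  induction h with
  | single h =>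
    rcases hR _ _ h with h | ⟨-, rfl⟩
    · exact .inl (.single h)
    · exact .inr .refl
  | tail _ h ih =>
    rcases hR _ _ h with h | ⟨-, rfl⟩
    · exact ih.imp (·.tail h) (·.tail h)
    · exact .inr .refl

theorem TransGen.of_le_or_edge (hR : ∀ u v, R' u v → R u v ∨ u = a ∧ v = b)
    (hab : ∀ z, TransGen R z a → TransGen R z b) (hx : x ≠ a) (h : TransGen R' x y) :
    TransGen R x y := by
  induction h with
  | single h =>
    rcases hR _ _ h with h | ⟨rfl, -⟩
    · exact .single h
    · exact absurd rfl hx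
  | tail _ h ih =>
    rcases hR _ _ h with h | ⟨rfl, rfl⟩
    · exact ih.tail h
    · exact hab x ih

end Relation

theorem List.IsChain.transGen_of_mem {α : Type*} {R : α → α → Prop} :
    ∀ {x : α} {l : List α}, List.IsChain R (x :: l) → ∀ y ∈ l, Relation.TransGen R x y
  | _, [], _, y, hy => absurd hy List.not_mem_nil
  | _, b :: _, h, y, hy => by
    rw [List.isChain_cons_cons] at h
    rcases List.mem_cons.1 hy with rfl | hy
    · exact .single h.1
    · exact .head h.1 (transGen_of_mem h.2 y hy)

theorem Multiset.mem_of_mem_cons_erase {α : Type*} [DecidableEq α] {s : Multiset α}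
    {a b c : α} (h : a ∈ b ::ₘ s.erase c) : a = b ∨ a ∈ s :=
  (Multiset.mem_cons.1 h).imp_right Multiset.mem_of_mem_erase

namespace MergeSort

open Relation

def MSC.key : MSC → ℤ
  | .number x => x
  | .merge _ x => x
  | .arrow _ b => b

def arrowRel (S : Multiset MSC) (a b : ℤ) : Prop := MSC.arrow a b ∈ S

def descendants (S : Multiset MSC) (X : ℤ) : Set ℤ := {v | TransGen (arrowRel S) X v}

theorem Step.map_key {S S' : Multiset MSC} {lab : Lab} (h : Step S lab S') :
    S'.map MSC.key = S.map MSC.key := by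
  cases h with
  | ms1 X A B _ _ hB =>
    rw [Multiset.map_cons, Multiset.map_erase_of_mem _ _ hB]
    exact Multiset.cons_erase (a := B) (Multiset.mem_map_of_mem MSC.key hB)
  | ms2 N A B hAB hA hB _ =>
    have hB' : MSC.merge N B ∈ S.erase (MSC.merge N A) :=
      (Multiset.mem_erase_of_ne (by simp [hAB.ne'])).2 hB
    have hA' : A ∈ S.map MSC.key := Multiset.mem_map_of_mem MSC.key hA
    have hB'' : B ∈ (S.map MSC.key).erase A := by
      have := Multiset.mem_map_of_mem MSC.key hB'
      rwa [Multiset.map_erase_of_mem _ _ hA] at this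
    rw [Multiset.map_cons, Multiset.map_cons, Multiset.map_erase_of_mem _ _ hB',
      Multiset.map_erase_of_mem _ _ hA]
    exact (congrArg _ (Multiset.cons_erase hB'')).trans (Multiset.cons_erase hA')
  | ms3 X hX _ _ =>
    rw [Multiset.map_cons, Multiset.map_erase_of_mem _ _ hX]
    exact Multiset.cons_erase (a := X) (Multiset.mem_map_of_mem MSC.key hX)

structure Invariant (S : Multiset MSC) : Prop where
  nodup_keys : (S.map MSC.key).Nodup
  arrow_lt : ∀ {a b}, MSC.arrow a b ∈ S → a < b
  number_not_arrow : ∀ {x b}, MSC.number x ∈ S → MSC.arrow x b ∉ S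
  encard_descendants_le : ∀ {N X}, MSC.merge N X ∈ S → (descendants S X).encard ≤ N

namespace Invariant

variable {S : Multiset MSC}

theorem eq_of_key_eq (hI : Invariant S) {c d : MSC} (hc : c ∈ S) (hd : d ∈ S)
    (h : c.key = d.key) : c = d :=
  Multiset.inj_on_of_nodup_map hI.nodup_keys c hc d hd h

theorem step_ms1 (hI : Invariant S) {X A B : ℤ}
    (hk : ((MSC.arrow A B ::ₘ S.erase (MSC.arrow X B)).map MSC.key).Nodup) (hAB : A < B)
    (hA : MSC.arrow X A ∈ S) (hB : MSC.arrow X B ∈ S) :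
    Invariant (MSC.arrow A B ::ₘ S.erase (MSC.arrow X B)) := by
  have hR : ∀ u v, arrowRel (MSC.arrow A B ::ₘ S.erase (MSC.arrow X B)) u v →
      arrowRel S u v ∨ u = A ∧ v = B := fun u v h => by
    simpa [arrowRel, or_comm] using Multiset.mem_of_mem_cons_erase h
  refine ⟨hk, fun h => ?_, fun {x _} hx h => ?_, fun {M Y} hm => ?_⟩
  · rcases hR _ _ h with h | ⟨rfl, rfl⟩
    exacts [hI.arrow_lt h, hAB]
  · have hxS : MSC.number x ∈ S := by simpa using Multiset.mem_of_mem_cons_erase hx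
    rcases hR _ _ h with h | ⟨rfl, -⟩
    exacts [hI.number_not_arrow hxS h, nomatch hI.eq_of_key_eq hxS hA rfl]
  · have hmS : MSC.merge M Y ∈ S := by simpa using Multiset.mem_of_mem_cons_erase hm
    have hYA : Y ≠ A := fun hYA => nomatch hI.eq_of_key_eq hmS hA hYA
    have hab : ∀ z, TransGen (arrowRel S) z A → TransGen (arrowRel S) z B := fun z hz => by
      obtain ⟨w, hzw, hwA⟩ := TransGen.tail'_iff.1 hz
      obtain rfl : w = X := by simpa using hI.eq_of_key_eq hwA hA rfl
      exact .tail' hzw hB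
    exact (Set.encard_le_encard fun _ => TransGen.of_le_or_edge hR hab hYA).trans
      (hI.encard_descendants_le hmS)

theorem step_ms2 (hI : Invariant S) {N : ℕ} {A B : ℤ}
    (hk : ((MSC.merge (2 * N + 1) A ::ₘ MSC.arrow A B ::ₘ
      (S.erase (MSC.merge N A)).erase (MSC.merge N B)).map MSC.key).Nodup)
    (hAB : A < B) (hA : MSC.merge N A ∈ S) (hB : MSC.merge N B ∈ S) :
    Invariant (MSC.merge (2 * N + 1) A ::ₘ MSC.arrow A B ::ₘ
      (S.erase (MSC.merge N A)).erase (MSC.merge N B)) := by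
  set S' := MSC.merge (2 * N + 1) A ::ₘ MSC.arrow A B ::ₘ
    (S.erase (MSC.merge N A)).erase (MSC.merge N B)
  have hmem : ∀ {c}, c ∈ S' → c = MSC.merge (2 * N + 1) A ∨ c = MSC.arrow A B ∨ c ∈ S :=
    fun h => (Multiset.mem_cons.1 h).imp_right fun h => (Multiset.mem_cons.1 h).imp_right
      fun h => Multiset.mem_of_mem_erase (Multiset.mem_of_mem_erase h)
  have hR : ∀ u v, arrowRel S' u v → arrowRel S u v ∨ u = A ∧ v = B := fun u v h => by
    simpa [arrowRel, or_comm] using hmem h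
  have hA_root : ∀ z, ¬ TransGen (arrowRel S) z A := fun z hz => by
    obtain ⟨w, -, hwA⟩ := TransGen.tail'_iff.1 hz
    exact nomatch hI.eq_of_key_eq hwA hA rfl
  refine ⟨hk, fun h => ?_, fun {x _} hx h => ?_, fun {M Y} hm => ?_⟩
  · rcases hR _ _ h with h | ⟨rfl, rfl⟩
    exacts [hI.arrow_lt h, hAB]
  · have hxS : MSC.number x ∈ S := by simpa using hmem hx
    rcases hR _ _ h with h | ⟨rfl, -⟩
    exacts [hI.number_not_arrow hxS h, nomatch hI.eq_of_key_eq hxS hA rfl]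
  by_cases hYA : Y = A
  · subst hYA
    obtain rfl : M = 2 * N + 1 := by
      simpa using Multiset.inj_on_of_nodup_map hk _ hm _ (Multiset.mem_cons_self _ _) rfl
    have hsub : descendants S' Y ⊆ descendants S Y ∪ insert B (descendants S B) := fun v hv =>
      (TransGen.transGen_or_reflTransGen_of_le_or_edge hR hv).imp_right
        reflTransGen_iff_eq_or_transGen.1
    calc (descendants S' Y).encard
        ≤ (descendants S Y).encard + ((descendants S B).encard + 1) :=
          (Set.encard_le_encard hsub).trans ((Set.encard_union_le _ _).trans
            (add_le_add_right (Set.encard_insert_le _ _) _))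
      _ ≤ N + (N + 1) := by
          gcongr
          exacts [hI.encard_descendants_le hA, hI.encard_descendants_le hB]
      _ = (2 * N + 1 : ℕ) := by push_cast; ring
  · have hmS : MSC.merge M Y ∈ S := by simpa [hYA] using hmem hm
    exact (Set.encard_le_encard fun _ => TransGen.of_le_or_edge hR
      (fun z hz => absurd hz (hA_root z)) hYA).trans (hI.encard_descendants_le hmS)

theorem step_ms3 (hI : Invariant S) {X : ℤ}
    (hk : ((MSC.merge 0 X ::ₘ S.erase (MSC.number X)).map MSC.key).Nodup)
    (hX : MSC.number X ∈ S) : Invariant (MSC.merge 0 X ::ₘ S.erase (MSC.number X)) := by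
  have hR : ∀ u v, arrowRel (MSC.merge 0 X ::ₘ S.erase (MSC.number X)) u v → arrowRel S u v :=
    fun u v h => by simpa [arrowRel] using Multiset.mem_of_mem_cons_erase h
  refine ⟨hk, fun h => hI.arrow_lt (hR _ _ h), fun hx h => ?_, fun {M Y} hm => ?_⟩
  · exact hI.number_not_arrow (by simpa using Multiset.mem_of_mem_cons_erase hx) (hR _ _ h)
  have hsub : descendants (MSC.merge 0 X ::ₘ S.erase (MSC.number X)) Y ⊆ descendants S Y :=
    fun _ => TransGen.mono hR _ _
  rcases Multiset.mem_of_mem_cons_erase hm with h | h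
  · obtain ⟨rfl, rfl⟩ : M = 0 ∧ Y = X := by simpa using h
    have hleaf : descendants S Y = ∅ := Set.eq_empty_of_forall_notMem fun v hv => by
      obtain ⟨b, hb, -⟩ := TransGen.head'_iff.1 hv
      exact hI.number_not_arrow hX hb
    simpa [hleaf] using Set.encard_le_encard hsub
  · exact (Set.encard_le_encard hsub).trans (hI.encard_descendants_le h)

theorem step (hI : Invariant S) {S' : Multiset MSC} {lab : Lab} (h : Step S lab S') :
    Invariant S' := by
  have hk := h.map_key ▸ hI.nodup_keys
  cases h with
  | ms1 X A B hAB hA hB => exact hI.step_ms1 hk hAB hA hB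
  | ms2 N A B hAB hA hB _ => exact hI.step_ms2 hk hAB hA hB
  | ms3 X hX _ _ => exact hI.step_ms3 hk hX

theorem length_le_of_isChain (hI : Invariant S) {N : ℕ} {X : ℤ} (hm : MSC.merge N X ∈ S)
    {cs : List ℤ} (hcs : List.IsChain (arrowRel S) (X :: cs)) : cs.length ≤ N := by
  have hnodup : cs.Nodup :=
    (List.isChain_iff_pairwise.1 (hcs.imp fun _ _ h => hI.arrow_lt h)).of_cons.imp ne_of_lt
  have hsub : (cs.toFinset : Set ℤ) ⊆ descendants S X :=
    fun y hy => hcs.transGen_of_mem y (List.mem_toFinset.1 hy)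
  have := (Set.encard_le_encard hsub).trans (hI.encard_descendants_le hm)
  rwa [Set.encard_coe_eq_coe_finsetCard, List.toFinset_card_of_nodup hnodup, Nat.cast_le] at this

end Invariant

theorem invariant_initState {l : List ℤ} (hl : l.Nodup) : Invariant (InitState l) := by
  have hmem : ∀ {c}, c ∈ InitState l → ∃ x, c = MSC.number x := fun h => by
    obtain ⟨x, -, rfl⟩ := List.mem_map.1 (Multiset.mem_coe.1 h)
    exact ⟨x, rfl⟩
  refine ⟨?_, fun h => ?_, fun _ h => ?_, fun h => ?_⟩
  · simpa [InitState, MSC.key, Function.comp_def] using hl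
  all_goals obtain ⟨x, ⟨⟩⟩ := hmem h

theorem Reach.invariant {l : List ℤ} {S : Multiset MSC} (hl : l.Nodup) (h : Reach l S) :
    Invariant S := by
  induction h with
  | refl => exact invariant_initState hl
  | tail _ hstep ih => exact ih.step hstep.choose_spec

end MergeSort

open MergeSort in
theorem merge_bounds_chain_length_general
    (l : List ℤ) (hnodup : l.Nodup)
    (S : Multiset MSC) (hS : Reach l S) :
    ∀ (N : ℕ) (X : ℤ), MSC.merge N X ∈ S →
      ∀ cs : List ℤ, List.Chain (fun a b => MSC.arrow a b ∈ S) X cs →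
        cs.length ≤ N :=
  fun _ _ hm _ hcs => (hS.invariant hnodup).length_le_of_isChain hm hcs

open MergeSort in
/-- In the merge sort CHR^rp program executed under ω_p from an initial goal of `n`
distinct `number/1` constraints: in every reachable state of priority 2 or lower
(i.e., in which no priority-1 rule instance is applicable), for every stored
constraint `merge N X` the maximal length of a chain starting in `X` is at most `N`
(a chain of length `m` from `X` is a list `X₁, …, X_m` with
`arrow X X₁, arrow X₁ X₂, …, arrow X_{m−1} X_m` all stored). -/
theorem merge_bounds_chain_length
    (n : ℕ) (l : List ℤ) (hlen : l.length = n) (hnodup : l.Nodup)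
    (S : Multiset MSC) (hS : Reach l S) (hprio : ¬ ms1App S) :
    ∀ (N : ℕ) (X : ℤ), MSC.merge N X ∈ S →
      ∀ cs : List ℤ, List.Chain (fun a b => MSC.arrow a b ∈ S) X cs →
        cs.length ≤ N :=
  merge_bounds_chain_length_general l hnodup S hS
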